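/- Let λ, μ be partitions with ℓ = ℓ(λ), k = ℓ(μ), n ∈ ℤ_{≥0}, and η = r_n(λ). Then for all u ∈ ℂ: N_{μ,λ}(u)/N_{μ,η}(qu) = N_{μ̄,λ}(qu)/N_{μ̄,η}(q²u) · (1 − q^{|η|−|λ|+1−k}u)/(1 − qu), interpreted as the polynomial identity N_{μ,λ}(u)·N_{μ̄,η}(q²u)·(1−qu) = N_{μ̄,λ}(qu)·N_{μ,η}(qu)·(1 − q^{|η|−|λ|+1−k}u). -/

import Mathlib

open Finset

noncomputable section

/-- The `i`-th part (0-indexed) of a partition given as a list of parts. -/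
def part (l : List ℕ) (i : ℕ) : ℕ := l.getD i 0

/-- The `j`-th column length (0-indexed), i.e. λ'_{j+1} = #{i : λ_i ≥ j+1}. -/
def conjPart (l : List ℕ) (j : ℕ) : ℕ := (l.filter (fun p => j < p)).length

/-- A list of naturals represents a partition: weakly decreasing with positive parts. -/
def IsPartition (l : List ℕ) : Prop := l.Pairwise (· ≥ ·) ∧ ∀ p ∈ l, 0 < p

/-- The Nekrasov factor N_{λ,μ}(u) =
  ∏_{(i,j)∈λ}(1 - q^{-ℓ_λ(i,j)-a_μ(i,j)-1} u) · ∏_{(i,j)∈μ}(1 - q^{ℓ_μ(i,j)+a_λ(i,j)+1} u),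
  with cells 0-indexed: arm a_μ(i,j) = μ_{i+1} - (j+1), leg ℓ_λ(i,j) = λ'_{j+1} - (i+1). -/
def nek (q u : ℂ) (lam mu : List ℕ) : ℂ :=
  (∏ i ∈ Finset.range lam.length, ∏ j ∈ Finset.range (part lam i),
    (1 - q ^ (-((conjPart lam j : ℤ) - ((i : ℤ) + 1)) - ((part mu i : ℤ) - ((j : ℤ) + 1)) - 1) * u)) *
  (∏ i ∈ Finset.range mu.length, ∏ j ∈ Finset.range (part mu i),
    (1 - q ^ (((conjPart mu j : ℤ) - ((i : ℤ) + 1)) + ((part lam i : ℤ) - ((j : ℤ) + 1)) + 1) * u))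

/-- λ̄ : all parts decreased by 1, zero parts dropped. -/
def bar (l : List ℕ) : List ℕ := (l.map (fun p => p - 1)).filter (fun p => 0 < p)

/-- r_n(λ) = (λ_1+1, …, λ_n+1, λ_{n+2}, λ_{n+3}, …). -/
def rn (n : ℕ) (l : List ℕ) : List ℕ :=
  ((List.range n).map (fun i => part l i + 1)) ++ l.drop (n + 1)

/-- The conjugate (transposed) partition as a list. -/
def conjList (l : List ℕ) : List ℕ :=
  (List.range (part l 0)).map (fun j => conjPart l j)

end

/-!
Write `N_{λ,μ}(u) = ∏_{e ∈ E(λ,μ)} (1 - q^e u)` for the multiset `E(λ,μ)` of exponents. The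
identity becomes an identity of multisets of exponents, and hence of their characters
`χ_{λ,μ} = ∑_{e ∈ E(λ,μ)} T^e` in `ℤ[T,T⁻¹]`, which is a domain, so we may multiply by `T - 1`.
Summing the geometric series along each row shows that for partitions with at most `N` rows
`(T - 1) χ_{λ,μ} = (1 - T) P_λ Q_μ + T^N P_λ - T^{1-N} Q_μ`, where `P_λ = ∑_{i<N} T^{λ_i - i}` and
`Q_μ = ∑_{i<N} T^{i - μ_i}` (rows counted from `0`). Passing from `μ` to `μ̄` multiplies `P_μ` by
`T⁻¹` up to boundary terms, and passing from `λ` to `r_n(λ)` does the same to `Q_λ` with the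
extra term `T^{n - λ_n}`; the identity is then a polynomial computation in `P` and `Q`.
-/

open LaurentPolynomial

@[simp] lemma part_nil (i : ℕ) : part [] i = 0 := rfl

@[simp] lemma part_cons_zero (a : ℕ) (t : List ℕ) : part (a :: t) 0 = a := rfl

@[simp] lemma part_cons_succ (a : ℕ) (t : List ℕ) (i : ℕ) : part (a :: t) (i + 1) = part t i := rfl

lemma part_eq_zero {l : List ℕ} {i : ℕ} (h : l.length ≤ i) : part l i = 0 :=
  List.getD_eq_default _ _ h

lemma part_mem {l : List ℕ} {i : ℕ} (h : i < l.length) : part l i ∈ l := by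
  rw [part, List.getD_eq_getElem l 0 h]
  exact List.getElem_mem h

lemma IsPartition.of_cons {a : ℕ} {t : List ℕ} (h : IsPartition (a :: t)) :
    IsPartition t ∧ ∀ x ∈ t, x ≤ a := by
  obtain ⟨hs, hp⟩ := h
  rw [List.pairwise_cons] at hs
  exact ⟨⟨hs.2, fun p hp' => hp p (List.mem_cons_of_mem a hp')⟩, hs.1⟩

lemma part_le_of_forall_le {a : ℕ} {l : List ℕ} (h : ∀ x ∈ l, x ≤ a) (i : ℕ) : part l i ≤ a := by
  rcases Nat.lt_or_ge i l.length with hi | hi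
  · exact h _ (part_mem hi)
  · rw [part_eq_zero hi]; exact Nat.zero_le a

lemma IsPartition.antitone_part {l : List ℕ} (hl : IsPartition l) : Antitone (part l) := by
  intro i j hij
  induction l generalizing i j with
  | nil => simp
  | cons a t ih =>
    obtain ⟨ht, hle⟩ := IsPartition.of_cons hl
    match i, j with
    | 0, 0 => exact le_rfl
    | 0, j + 1 => exact part_le_of_forall_le hle j
    | i + 1, j + 1 => exact ih ht (by omega : i ≤ j)

lemma conjPart_cons (a : ℕ) (t : List ℕ) (j : ℕ) :
    conjPart (a :: t) j = (if j < a then 1 else 0) + conjPart t j := by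
  simp only [conjPart, List.filter_cons, decide_eq_true_eq]
  split <;> simp [add_comm]

lemma IsPartition.lt_part_iff {l : List ℕ} (hl : IsPartition l) {i j : ℕ} :
    j < part l i ↔ i < conjPart l j := by
  induction l generalizing i with
  | nil => simp [conjPart]
  | cons a t ih =>
    obtain ⟨ht, hle⟩ := IsPartition.of_cons hl
    rw [conjPart_cons]
    by_cases hj : j < a
    · rw [if_pos hj]
      cases i with
      | zero => simpa using hj
      | succ i => simp only [part_cons_succ, @ih ht i]; omega
    · have hcol : conjPart t j = 0 := by
        simpa [conjPart] using fun x hx => (hle x hx).trans (not_lt.mp hj)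
      rw [if_neg hj, hcol]
      cases i with
      | zero => simpa using hj
      | succ i => simpa using (part_le_of_forall_le hle i).trans (not_lt.mp hj)

lemma IsPartition.conjPart_eq {l : List ℕ} (hl : IsPartition l) {i j : ℕ}
    (h₁ : part l (i + 1) ≤ j) (h₂ : j < part l i) : conjPart l j = i + 1 := by
  have := hl.lt_part_iff.mp h₂
  have := mt hl.lt_part_iff.mpr (not_lt.mpr h₁)
  omega

lemma part_bar {l : List ℕ} (hl : IsPartition l) (i : ℕ) : part (bar l) i = part l i - 1 := by
  induction l generalizing i with
  | nil => simp [bar]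
  | cons a t ih =>
    obtain ⟨ht, hle⟩ := IsPartition.of_cons hl
    by_cases ha : 1 < a
    · have hbar : bar (a :: t) = (a - 1) :: bar t := by simp [bar, ha]
      cases i with
      | zero => simp [hbar]
      | succ i => simpa [hbar] using ih ht i
    · have hbar : bar (a :: t) = bar t := by simp [bar, ha]
      have h₁ := part_le_of_forall_le hle i
      have h₂ : part (a :: t) i ≤ 1 :=
        part_le_of_forall_le (List.forall_mem_cons.mpr ⟨by omega, fun x hx => by
          have := hle x hx; omega⟩) i
      rw [hbar, ih ht i]
      omega

lemma isPartition_bar {l : List ℕ} (hl : IsPartition l) : IsPartition (bar l) :=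
  ⟨(hl.1.map (R := (· ≥ ·)) (· - 1) fun _ _ h => Nat.sub_le_sub_right h 1).sublist
      List.filter_sublist,
    fun p hp => by simpa using (List.mem_filter.mp hp).2⟩

lemma length_bar_le (l : List ℕ) : (bar l).length ≤ l.length :=
  List.filter_sublist.length_le.trans_eq (List.length_map _)

lemma rn_zero (l : List ℕ) : rn 0 l = l.tail := by simp [rn]

lemma rn_succ_cons (n a : ℕ) (t : List ℕ) : rn (n + 1) (a :: t) = (a + 1) :: rn n t := by
  simp [rn, List.range_succ_eq_map]

lemma rn_succ_nil (n : ℕ) : rn (n + 1) [] = 1 :: rn n [] := by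
  simp [rn, List.range_succ_eq_map, Function.comp_def]

lemma part_rn (n : ℕ) (l : List ℕ) (i : ℕ) :
    part (rn n l) i = if i < n then part l i + 1 else part l (i + 1) := by
  induction n generalizing l i with
  | zero => cases l <;> simp [rn_zero, part]
  | succ n ih => cases l <;> cases i <;> simp [rn_succ_cons, rn_succ_nil, ih]

lemma length_rn (n : ℕ) (l : List ℕ) : (rn n l).length = n + (l.length - (n + 1)) := by
  simp [rn]

lemma sum_rn_add_part (n : ℕ) (l : List ℕ) : (rn n l).sum + part l n = n + l.sum := by
  induction n generalizing l with
  | zero => cases l <;> simp [rn_zero, add_comm]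
  | succ n ih =>
    cases l with
    | nil => simpa [rn_succ_nil, add_comm] using ih []
    | cons a t => simp only [rn_succ_cons, List.sum_cons, part_cons_succ]; have := ih t; omega

lemma IsPartition.part_pos {l : List ℕ} (hl : IsPartition l) {i : ℕ} (h : i < l.length) :
    0 < part l i :=
  hl.2 _ (part_mem h)

lemma isPartition_of_part {l : List ℕ} (hanti : Antitone (part l))
    (hpos : ∀ i < l.length, 0 < part l i) : IsPartition l := by
  have hget : ∀ i (h : i < l.length), l[i] = part l i := fun i h =>
    (List.getD_eq_getElem l 0 h).symm
  refine ⟨List.pairwise_iff_getElem.mpr fun i j hi hj hij => ?_, fun p hp => ?_⟩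
  · rw [hget i hi, hget j hj]
    exact hanti hij.le
  · obtain ⟨i, hi, rfl⟩ := List.mem_iff_getElem.mp hp
    rw [hget i hi]
    exact hpos i hi

lemma isPartition_rn {l : List ℕ} (hl : IsPartition l) (n : ℕ) : IsPartition (rn n l) := by
  refine isPartition_of_part (fun i j hij => ?_) (fun i hi => ?_)
  · have h₁ := hl.antitone_part hij
    have h₂ := hl.antitone_part (show i + 1 ≤ j + 1 by omega)
    have h₃ := hl.antitone_part (show i ≤ j + 1 by omega)
    simp only [part_rn]
    split_ifs <;> omega
  · rw [length_rn] at hi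
    rw [part_rn]
    split_ifs
    · omega
    · exact hl.part_pos (by omega)

lemma length_rn_le (n : ℕ) (l : List ℕ) : (rn n l).length ≤ n + l.length := by
  rw [length_rn]; omega

noncomputable def expChar (m : Multiset ℤ) : ℤ[T;T⁻¹] := (m.map T).sum

lemma expChar_add (m m' : Multiset ℤ) : expChar (m + m') = expChar m + expChar m' := by
  simp [expChar]

lemma expChar_singleton (a : ℤ) : expChar {a} = T a := by
  simp [expChar]

lemma expChar_map_add (s : ℤ) (m : Multiset ℤ) : expChar (m.map (· + s)) = T s * expChar m := by
  simp only [expChar, Multiset.map_map, Function.comp_def, add_comm _ s, T_add,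
    Multiset.sum_map_mul_left]

lemma coeff_expChar (m : Multiset ℤ) (z : ℤ) : (expChar m).coeff z = m.count z := by
  induction m using Multiset.induction_on with
  | empty => simp [expChar]
  | cons a m ih =>
    rw [expChar, Multiset.map_cons, Multiset.sum_cons] at *
    simp [ih, Multiset.count_cons, eq_comm, add_comm]

lemma expChar_injective : Function.Injective expChar := fun m m' h =>
  Multiset.ext.mpr fun z => by
    have := congrArg (·.coeff z) h
    simp only [coeff_expChar] at this
    exact_mod_cast this

def nekExponents (A B : List ℕ) : Multiset ℤ :=
  (Multiset.range A.length).bind (fun i => (Multiset.range (part A i)).map fun j =>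
    -((conjPart A j : ℤ) - ((i : ℤ) + 1)) - ((part B i : ℤ) - ((j : ℤ) + 1)) - 1) +
  (Multiset.range B.length).bind (fun i => (Multiset.range (part B i)).map fun j =>
    ((conjPart B j : ℤ) - ((i : ℤ) + 1)) + ((part A i : ℤ) - ((j : ℤ) + 1)) + 1)

lemma nek_eq_prod (q u : ℂ) (A B : List ℕ) :
    nek q u A B = ((nekExponents A B).map fun e => 1 - q ^ e * u).prod := by
  simp only [nek, nekExponents, Multiset.map_add, Multiset.prod_add, Multiset.map_bind,
    Multiset.prod_bind, Multiset.map_map, Finset.prod_eq_multiset_prod, Finset.range_val,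
    Function.comp_def]

lemma nek_zpow_mul {q : ℂ} (hq : q ≠ 0) (s : ℤ) (u : ℂ) (A B : List ℕ) :
    nek q (q ^ s * u) A B = (((nekExponents A B).map (· + s)).map fun e => 1 - q ^ e * u).prod := by
  simp only [nek_eq_prod, Multiset.map_map, Function.comp_def, zpow_add₀ hq, mul_assoc]

def shiftedPart (l : List ℕ) (i : ℕ) : ℤ := part l i - i

-- The cell `(i, j)` of `A` contributes `T^(j + 1 - A'_j) * T^(i - B_i)` to the character of
-- `N_{A,B}`, so `legChar A i` collects the contribution of row `i` up to that factor.
noncomputable def legChar (l : List ℕ) (i : ℕ) : ℤ[T;T⁻¹] :=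
  ∑ j ∈ range (part l i), T ((j : ℤ) + 1 - conjPart l j)

lemma expChar_bind (L : ℕ) (g : ℕ → ℕ) (f : ℕ → ℕ → ℤ) :
    expChar ((Multiset.range L).bind fun i => (Multiset.range (g i)).map (f i)) =
      ∑ i ∈ range L, ∑ j ∈ range (g i), T (f i j) := by
  simp only [expChar, Multiset.map_bind, Multiset.sum_bind, Multiset.map_map,
    Finset.sum_eq_multiset_sum, Finset.range_val, Function.comp_def]

lemma expChar_nekExponents (A B : List ℕ) :
    expChar (nekExponents A B) =
      ∑ i ∈ range A.length, T (-shiftedPart B i) * legChar A i +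
      ∑ i ∈ range B.length, T (shiftedPart A i) * invert (legChar B i) := by
  simp only [nekExponents, expChar_add, expChar_bind, legChar, map_sum, invert_T, Finset.mul_sum,
    ← T_add, shiftedPart]
  congr 1 <;> refine sum_congr rfl fun i _ => sum_congr rfl fun j _ => congrArg T (by ring)

lemma legChar_eq_zero {l : List ℕ} {i : ℕ} (h : l.length ≤ i) : legChar l i = 0 := by
  simp [legChar, part_eq_zero h]

lemma IsPartition.legChar_eq {l : List ℕ} (hl : IsPartition l) (i : ℕ) :
    legChar l i = legChar l (i + 1) + ∑ j ∈ Ico (part l (i + 1)) (part l i), T ((j : ℤ) - i) := by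
  rw [legChar, legChar, ← sum_range_add_sum_Ico _ (hl.antitone_part (Nat.le_succ i))]
  congr 1
  refine sum_congr rfl fun j hj => ?_
  rw [Finset.mem_Ico] at hj
  rw [hl.conjPart_eq hj.1 hj.2]
  push_cast
  ring_nf

lemma T_one_sub_one_mul_sum_Ico (c : ℤ) {a b : ℕ} (h : a ≤ b) :
    ((T 1 : ℤ[T;T⁻¹]) - 1) * ∑ j ∈ Ico a b, T ((j : ℤ) - c) =
      T ((b : ℤ) - c) - T ((a : ℤ) - c) := by
  rw [Finset.mul_sum, ← Finset.sum_Ico_sub (fun j : ℕ => (T ((j : ℤ) - c) : ℤ[T;T⁻¹])) h]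
  refine sum_congr rfl fun j _ => ?_
  rw [sub_mul, one_mul, ← T_add]
  push_cast
  ring_nf

lemma IsPartition.T_one_sub_one_mul_legChar {l : List ℕ} (hl : IsPartition l) {N i : ℕ}
    (hN : l.length ≤ N) (hi : i ≤ N) :
    ((T 1 : ℤ[T;T⁻¹]) - 1) * legChar l i =
      (1 - T 1) * ∑ r ∈ Ico i N, T (shiftedPart l r) + T (shiftedPart l i + 1) - T (1 - N) := by
  refine Nat.decreasingInduction (fun k hk ih => ?_) ?_ hi
  · have hstep := T_one_sub_one_mul_sum_Ico k (hl.antitone_part (show k ≤ k + 1 by omega))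
    have e₁ : (T (shiftedPart l (k + 1) + 1) : ℤ[T;T⁻¹]) = T ((part l (k + 1) : ℤ) - k) :=
      congrArg T (by push_cast [shiftedPart]; ring)
    have e₂ : (T (shiftedPart l k + 1) : ℤ[T;T⁻¹]) = T 1 * T (shiftedPart l k) := by
      rw [← T_add, add_comm]
    have e₃ : (T (shiftedPart l k) : ℤ[T;T⁻¹]) = T ((part l k : ℤ) - k) := rfl
    rw [hl.legChar_eq, mul_add, ih, Finset.sum_eq_sum_Ico_succ_bot hk]
    linear_combination e₁ - e₂ + hstep - e₃
  · simp [legChar_eq_zero hN, shiftedPart, part_eq_zero hN, sub_eq_add_neg, add_comm]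

lemma IsPartition.T_one_sub_one_mul_invert_legChar {l : List ℕ} (hl : IsPartition l) {N i : ℕ}
    (hN : l.length ≤ N) (hi : i ≤ N) :
    ((T 1 : ℤ[T;T⁻¹]) - 1) * invert (legChar l i) =
      (1 - T 1) * ∑ r ∈ Ico i N, T (-shiftedPart l r) - T (-shiftedPart l i) + T N := by
  have h := congrArg invert (hl.T_one_sub_one_mul_legChar hN hi)
  simp only [map_sub, map_add, map_mul, map_sum, map_one, invert_T] at h
  have e₁ : (T 1 : ℤ[T;T⁻¹]) * T (-1) = 1 := by rw [← T_add]; rfl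
  have e₂ : (T 1 : ℤ[T;T⁻¹]) * T (-(shiftedPart l i + 1)) = T (-shiftedPart l i) := by
    rw [← T_add]; congr 1; ring
  have e₃ : (T 1 : ℤ[T;T⁻¹]) * T (-(1 - N)) = T N := by rw [← T_add]; congr 1; ring
  linear_combination (-T 1) * h + (invert (legChar l i) + ∑ r ∈ Ico i N, T (-shiftedPart l r)) * e₁
    - e₂ + e₃

lemma sum_range_sum_Ico_add {M : Type*} [AddCommMonoid M] (f : ℕ → ℕ → M) (N : ℕ) :
    ∑ i ∈ range N, ∑ r ∈ Ico i N, (f r i + f i r) =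
      ∑ i ∈ range N, ∑ j ∈ range N, f i j + ∑ i ∈ range N, f i i := by
  induction N with
  | zero => simp
  | succ N ih =>
    have hsplit : ∀ i ∈ range (N + 1), ∑ r ∈ Ico i (N + 1), (f r i + f i r) =
        ∑ r ∈ Ico i N, (f r i + f i r) + (f N i + f i N) := fun i hi =>
      Finset.sum_Ico_succ_top (Nat.lt_succ_iff.mp (Finset.mem_range.mp hi)) _
    rw [sum_congr rfl hsplit, sum_range_succ, sum_add_distrib, ih]
    simp only [sum_range_succ, sum_add_distrib, Finset.Ico_self, sum_empty, zero_add]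
    abel

noncomputable def rowChar (l : List ℕ) (N : ℕ) : ℤ[T;T⁻¹] := ∑ i ∈ range N, T (shiftedPart l i)

theorem T_one_sub_one_mul_expChar_nekExponents {A B : List ℕ} (hA : IsPartition A)
    (hB : IsPartition B) {N : ℕ} (hAN : A.length ≤ N) (hBN : B.length ≤ N) :
    ((T 1 : ℤ[T;T⁻¹]) - 1) * expChar (nekExponents A B) =
      (1 - T 1) * (rowChar A N * invert (rowChar B N)) + T N * rowChar A N -
        T (1 - N) * invert (rowChar B N) := by
  have hAsum : ∑ i ∈ range A.length, T (-shiftedPart B i) * legChar A i =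
      ∑ i ∈ range N, T (-shiftedPart B i) * legChar A i :=
    sum_subset (range_subset_range.mpr hAN) fun i _ hi => by
      rw [legChar_eq_zero (by simpa using hi), mul_zero]
  have hBsum : ∑ i ∈ range B.length, T (shiftedPart A i) * invert (legChar B i) =
      ∑ i ∈ range N, T (shiftedPart A i) * invert (legChar B i) :=
    sum_subset (range_subset_range.mpr hBN) fun i _ hi => by
      rw [legChar_eq_zero (by simpa using hi), map_zero, mul_zero]
  rw [expChar_nekExponents, hAsum, hBsum, ← sum_add_distrib, mul_sum]
  set a : ℕ → ℤ[T;T⁻¹] := fun i => T (shiftedPart A i)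
  set b : ℕ → ℤ[T;T⁻¹] := fun i => T (-shiftedPart B i)
  have hrow : ∀ i ∈ range N,
      ((T 1 : ℤ[T;T⁻¹]) - 1) * (b i * legChar A i + a i * invert (legChar B i)) =
        (1 - T 1) * ∑ r ∈ Ico i N, (a r * b i + a i * b r) + (T 1 - 1) * (a i * b i) +
          (T N * a i - T (1 - N) * b i) := fun i hi => by
    have hiN := (Finset.mem_range.mp hi).le
    have e : (T (shiftedPart A i + 1) : ℤ[T;T⁻¹]) = T 1 * a i := by rw [← T_add, add_comm]
    have hsum : ∑ r ∈ Ico i N, (a r * b i + a i * b r) =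
        b i * ∑ r ∈ Ico i N, a r + a i * ∑ r ∈ Ico i N, b r := by
      rw [sum_add_distrib, ← sum_mul, ← mul_sum, mul_comm]
    linear_combination b i * hA.T_one_sub_one_mul_legChar hAN hiN
      + a i * hB.T_one_sub_one_mul_invert_legChar hBN hiN + b i * e - (1 - T 1) * hsum
  have hB' : invert (rowChar B N) = ∑ i ∈ range N, b i := by simp [rowChar, b, map_sum]
  rw [sum_congr rfl hrow, sum_add_distrib, sum_add_distrib, ← mul_sum, ← mul_sum,
    sum_range_sum_Ico_add (fun i j => a i * b j), hB', rowChar, sum_mul_sum, sum_sub_distrib,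
    ← mul_sum, ← mul_sum]
  ring

lemma IsPartition.rowChar_eq_bar {μ : List ℕ} (hμ : IsPartition μ) {N : ℕ} (hN : μ.length ≤ N) :
    rowChar μ N = T 1 * rowChar (bar μ) N + T (1 - N) - T (1 - μ.length) := by
  set f : ℕ → ℤ[T;T⁻¹] := fun i => T (1 - i)
  have hlow : ∀ i ∈ range μ.length,
      (T (shiftedPart μ i) : ℤ[T;T⁻¹]) = T 1 * T (shiftedPart (bar μ) i) := fun i hi => by
    have := hμ.part_pos (Finset.mem_range.mp hi)
    rw [← T_add, shiftedPart, shiftedPart, part_bar hμ]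
    congr 1
    omega
  have hhigh : ∀ i ∈ Ico μ.length N,
      (T (shiftedPart μ i) : ℤ[T;T⁻¹]) = T 1 * T (shiftedPart (bar μ) i) + (f (i + 1) - f i) :=
    fun i hi => by
    have hi' := (Finset.mem_Ico.mp hi).1
    simp only [f, shiftedPart, part_bar hμ, part_eq_zero hi', ← T_add]
    push_cast
    ring_nf
  rw [rowChar, rowChar, mul_sum, ← sum_range_add_sum_Ico _ hN, ← sum_range_add_sum_Ico _ hN,
    sum_congr rfl hlow, sum_congr rfl hhigh, sum_add_distrib, sum_Ico_sub f hN]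
  ring

lemma rowChar_eq_rn {l : List ℕ} {n N : ℕ} (hl : l.length ≤ N) (hn : n ≤ N) :
    rowChar l N = T (-1) * rowChar (rn n l) N - T (-N) + T (shiftedPart l n) := by
  have hlow : ∀ i ∈ range n,
      (T (-1) * T (shiftedPart (rn n l) i) : ℤ[T;T⁻¹]) = T (shiftedPart l i) := fun i hi => by
    rw [← T_add, shiftedPart, shiftedPart, part_rn, if_pos (Finset.mem_range.mp hi)]
    push_cast
    ring_nf
  have hhigh : ∀ i ∈ Ico n N,
      (T (-1) * T (shiftedPart (rn n l) i) : ℤ[T;T⁻¹]) = T (shiftedPart l (i + 1)) :=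
    fun i hi => by
    rw [← T_add, shiftedPart, shiftedPart, part_rn, if_neg (by simp at hi; omega)]
    push_cast
    ring_nf
  have htop : (T (shiftedPart l N) : ℤ[T;T⁻¹]) = T (-N) := by
    rw [shiftedPart, part_eq_zero hl]
    simp
  have hrn : T (-1) * rowChar (rn n l) N =
      ∑ i ∈ range n, T (shiftedPart l i) + ∑ i ∈ Ico (n + 1) (N + 1), T (shiftedPart l i) := by
    rw [rowChar, ← sum_range_add_sum_Ico _ hn, mul_add, mul_sum, mul_sum, sum_congr rfl hlow,
      sum_congr rfl hhigh, sum_Ico_add' (fun i => (T (shiftedPart l i) : ℤ[T;T⁻¹]))]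
  have hl : rowChar l N + T (-N) = ∑ i ∈ range n, T (shiftedPart l i) + T (shiftedPart l n) +
      ∑ i ∈ Ico (n + 1) (N + 1), T (shiftedPart l i) := by
    rw [rowChar, ← htop, ← sum_range_succ, ← sum_range_add_sum_Ico _ (by omega : n ≤ N + 1),
      sum_eq_sum_Ico_succ_bot (by omega : n < N + 1), add_assoc]
  linear_combination hl - hrn

lemma T_one_sub_one_ne_zero : (T 1 : ℤ[T;T⁻¹]) - 1 ≠ 0 := by
  intro h
  simpa using congrArg (·.coeff 0) h

theorem expChar_nekExponents_rn {lam mu : List ℕ} (hlam : IsPartition lam) (hmu : IsPartition mu)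
    (n : ℕ) :
    expChar (nekExponents mu lam) + T 2 * expChar (nekExponents (bar mu) (rn n lam)) + T 1 =
      T 1 * expChar (nekExponents (bar mu) lam) + T 1 * expChar (nekExponents mu (rn n lam)) +
        T (1 - shiftedPart lam n - mu.length) := by
  set N := n + 1 + lam.length + mu.length
  have hbar := isPartition_bar hmu
  have heta := isPartition_rn hlam n
  have hmuN : mu.length ≤ N := by omega
  have hlamN : lam.length ≤ N := by omega
  have hbarN : (bar mu).length ≤ N := (length_bar_le mu).trans hmuN
  have hetaN : (rn n lam).length ≤ N := (length_rn_le n lam).trans (by omega)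
  have E₁ := T_one_sub_one_mul_expChar_nekExponents hmu hlam hmuN hlamN
  have E₂ := T_one_sub_one_mul_expChar_nekExponents hbar heta hbarN hetaN
  have E₃ := T_one_sub_one_mul_expChar_nekExponents hbar hlam hbarN hlamN
  have E₄ := T_one_sub_one_mul_expChar_nekExponents hmu heta hmuN hetaN
  have hP := hmu.rowChar_eq_bar hmuN
  have hQ := congrArg invert (rowChar_eq_rn (n := n) hlamN (by omega))
  simp only [map_add, map_sub, map_mul, invert_T, neg_neg] at hQ
  rw [hP] at E₁ E₄
  rw [hQ] at E₁ E₃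
  have hT2 : (T 2 : ℤ[T;T⁻¹]) = T 1 * T 1 := by rw [← T_add]; rfl
  have hN : (T N : ℤ[T;T⁻¹]) * T (1 - N) = T 1 := by rw [← T_add]; congr 1; ring
  have hU : (T (1 - shiftedPart lam n - mu.length) : ℤ[T;T⁻¹]) =
      T (1 - mu.length) * T (-shiftedPart lam n) := by rw [← T_add]; congr 1; ring
  rw [hT2, hU]
  apply mul_left_cancel₀ T_one_sub_one_ne_zero
  linear_combination E₁ + T 1 * T 1 * E₂ - T 1 * E₃ - T 1 * E₄ + (1 - T 1) * hN

theorem nekExponents_rn {lam mu : List ℕ} (hlam : IsPartition lam) (hmu : IsPartition mu) (n : ℕ) :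
    nekExponents mu lam + (nekExponents (bar mu) (rn n lam)).map (· + 2) + {1} =
      (nekExponents (bar mu) lam).map (· + 1) + (nekExponents mu (rn n lam)).map (· + 1) +
        {1 - shiftedPart lam n - mu.length} :=
  expChar_injective <| by
    simpa only [expChar_add, expChar_map_add, expChar_singleton] using
      expChar_nekExponents_rn hlam hmu n

theorem stmt18 (q : ℂ) (hq : q ≠ 0)
    (lam mu : List ℕ) (hlam : IsPartition lam) (hmu : IsPartition mu) (n : ℕ) (u : ℂ) :
    let eta := rn n lam
    nek q u mu lam * nek q (q ^ 2 * u) (bar mu) eta * (1 - q * u) =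
      nek q (q * u) (bar mu) lam * nek q (q * u) mu eta *
        (1 - q ^ ((eta.sum : ℤ) - (lam.sum : ℤ) + 1 - (mu.length : ℤ)) * u) := by
  intro eta
  have hsum : (eta.sum : ℤ) - lam.sum + 1 - mu.length = 1 - shiftedPart lam n - mu.length := by
    have := sum_rn_add_part n lam
    simp only [eta, shiftedPart]
    omega
  have key := congrArg (fun m => (m.map fun e => 1 - q ^ e * u).prod) (nekExponents_rn hlam hmu n)
  simp only [Multiset.map_add, Multiset.prod_add, Multiset.map_singleton, Multiset.prod_singleton,
    ← nek_zpow_mul hq, ← nek_eq_prod, zpow_one] at key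
  rw [hsum]
  exact_mod_cast key
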